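/- Let n ≥ 2, d₁,…,d_n ∈ ℝ, and let U ⊆ ℝⁿ be a connected open set all of whose points have pairwise distinct coordinates. Let β_ij (i ≠ j) be smooth functions on U satisfying (ED1) ∂_k β_ij = β_ik β_kj for pairwise distinct i,j,k, (ED2) e(β_ij) = 0 and (ED3) E(β_ij) = (d_i − d_j − 1)β_ij; set β_ii := 0 and define V_ij = (u^j − u^i)β_ij − (d_j − d₁)δ_ij. Then the characteristic polynomial of the matrix V(u) does not depend on u ∈ U: for all u, u' ∈ U, V(u) and V(u') have the same characteristic polynomial. -/

import Mathlib

/-- Partial derivative `∂_i f` of a function `f : ℝⁿ → ℝ` at `x`. -/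
noncomputable def pd {n : ℕ} (i : Fin n) (f : (Fin n → ℝ) → ℝ) (x : Fin n → ℝ) : ℝ :=
  fderiv ℝ f x (Pi.single i 1)

/-- The Lax matrix `V_ij = (u^j - u^i) β_ij - (d_j - d₁) δ_ij`. -/
noncomputable def Vmat {n : ℕ} (d : Fin n → ℝ) (d1 : ℝ)
    (β : Fin n → Fin n → (Fin n → ℝ) → ℝ) (x : Fin n → ℝ) :
    Matrix (Fin n) (Fin n) ℝ :=
  Matrix.of fun i j => (x j - x i) * β i j x - (d j - d1) * (if i = j then 1 else 0)

open Matrix MvPolynomial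

section Aux

attribute [local instance] Matrix.linftyOpNormedAddCommGroup Matrix.linftyOpNormedSpace
  Matrix.linftyOpNormedRing Matrix.linftyOpNormedAlgebra Matrix.linftyOpIsBoundedSMul

variable {n : ℕ}

abbrev MatR (n : ℕ) := Matrix (Fin n) (Fin n) ℝ

lemma charpoly_units_conj (P : (MatR n)ˣ) (M : MatR n) :
    ((P : MatR n) * M * ((P⁻¹ : (MatR n)ˣ) : MatR n)).charpoly = M.charpoly := by
  let Q : MatR n →+* Matrix (Fin n) (Fin n) (Polynomial ℝ) :=
    (Polynomial.C : ℝ →+* Polynomial ℝ).mapMatrix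
  let u : (Matrix (Fin n) (Fin n) (Polynomial ℝ))ˣ := Units.map Q.toMonoidHom P
  have hu : (u : Matrix (Fin n) (Fin n) (Polynomial ℝ)) = Q (P : MatR n) := rfl
  have hui : ((u⁻¹ : _ˣ) : Matrix (Fin n) (Fin n) (Polynomial ℝ)) = Q ((P⁻¹ : (MatR n)ˣ) : MatR n) := by
    rw [← map_inv (Units.map Q.toMonoidHom) P]; rfl
  have hscal : ∀ A : Matrix (Fin n) (Fin n) (Polynomial ℝ),
      (Matrix.scalar (Fin n)) Polynomial.X * A = A * (Matrix.scalar (Fin n)) Polynomial.X :=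
    fun A => (Matrix.scalar_commute Polynomial.X (fun r => Commute.all _ r) A)
  have key : charmatrix ((P : MatR n) * M * ((P⁻¹ : (MatR n)ˣ) : MatR n))
      = u * charmatrix M * (u⁻¹ : _ˣ) := by
    rw [charmatrix, charmatrix, hu, hui]
    rw [mul_sub, sub_mul]
    congr 1
    · rw [← hscal, mul_assoc, ← hu, ← hui, Units.mul_inv, mul_one]
    · rw [show Polynomial.C.mapMatrix (↑P * M * ↑P⁻¹) = Q (↑P * M * ↑P⁻¹) from rfl, _root_.map_mul, _root_.map_mul]
  rw [Matrix.charpoly, key, Matrix.det_units_conj, Matrix.charpoly]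

end Aux

section Aux2

attribute [local instance] Matrix.linftyOpNormedAddCommGroup Matrix.linftyOpNormedSpace
  Matrix.linftyOpNormedRing Matrix.linftyOpNormedAlgebra Matrix.linftyOpIsBoundedSMul

variable {n : ℕ}

noncomputable def entCLM (n : ℕ) : MatR n →L[ℝ] ((Fin n × Fin n) → ℝ) :=
  LinearMap.toContinuousLinearMap
    { toFun := fun M p => M p.1 p.2,
      map_add' := fun _ _ => rfl,
      map_smul' := fun _ _ => rfl }

lemma entCLM_apply (M : MatR n) (p : Fin n × Fin n) : entCLM n M p = M p.1 p.2 := rfl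

lemma charcoeff_eq_eval (k : ℕ) (M : MatR n) :
    M.charpoly.coeff k
      = eval (fun p : Fin n × Fin n => M p.1 p.2)
          ((Matrix.charpoly.univ ℝ (Fin n)).coeff k) := by
  have h := Matrix.charpoly.univ_coeff_eval₂Hom (Fin n) (RingHom.id ℝ)
    (fun p : Fin n × Fin n => M p.1 p.2) k
  have h2 : Matrix.of (Function.curry fun p : Fin n × Fin n => M p.1 p.2) = M := rfl
  rw [h2] at h
  rw [← h]
  rfl

lemma diff_evalP (P : MvPolynomial (Fin n × Fin n) ℝ) :
    Differentiable ℝ (fun v : (Fin n × Fin n) → ℝ => eval v P) :=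
  fun v => ((AnalyticOnNhd.eval_mvPolynomial P) v (Set.mem_univ v)).differentiableAt

lemma charcoeff_eq_comp (k : ℕ) :
    (fun M : MatR n => M.charpoly.coeff k)
      = (fun v : (Fin n × Fin n) → ℝ => eval v ((Matrix.charpoly.univ ℝ (Fin n)).coeff k))
          ∘ (entCLM n) :=
  funext fun M => charcoeff_eq_eval k M

lemma diff_charcoeff (k : ℕ) :
    Differentiable ℝ (fun M : MatR n => M.charpoly.coeff k) := by
  rw [charcoeff_eq_comp k]
  exact (diff_evalP _).comp (entCLM n).differentiable

end Aux2

section Aux3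

attribute [local instance] Matrix.linftyOpNormedAddCommGroup Matrix.linftyOpNormedSpace
  Matrix.linftyOpNormedRing Matrix.linftyOpNormedAlgebra Matrix.linftyOpIsBoundedSMul

variable {n : ℕ}

lemma fderiv_charcoeff_comm (k : ℕ) (V W : MatR n) :
    fderiv ℝ (fun M : MatR n => M.charpoly.coeff k) V (W * V - V * W) = 0 := by
  set F := fun M : MatR n => M.charpoly.coeff k with hF
  have hFd : Differentiable ℝ F := diff_charcoeff k
  set c : ℝ → MatR n := fun t => 1 + t • W with hc
  have hc0 : c 0 = 1 := by simp [hc]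
  have hcd : HasDerivAt c W 0 := by
    exact (((hasDerivAt_id (0 : ℝ)).smul_const W).const_add (1 : MatR n)).congr_deriv (one_smul ℝ W)
  have hunit : ∀ᶠ t : ℝ in nhds 0, IsUnit (c t) := by
    have ht : Filter.Tendsto (fun t : ℝ => ‖t • W‖) (nhds 0) (nhds 0) := by
      have : Filter.Tendsto (fun t : ℝ => t • W) (nhds 0) (nhds ((0:ℝ) • W)) :=
        (continuous_id.smul continuous_const).tendsto 0
      simpa using this.norm
    filter_upwards [ht.eventually_lt_const zero_lt_one] with t h
    exact ⟨Units.oneSub (-(t • W)) (by simpa using h), by simp [hc, Units.oneSub, sub_neg_eq_add]⟩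
  have hinv : HasDerivAt (fun t => Ring.inverse (c t)) (-W) 0 := by
    have h1 : HasFDerivAt (Ring.inverse : MatR n → MatR n)
        (-ContinuousLinearMap.mulLeftRight ℝ (MatR n)
          ((1 : (MatR n)ˣ)⁻¹ : (MatR n)ˣ) ((1 : (MatR n)ˣ)⁻¹ : (MatR n)ˣ)) (c 0) := by
      rw [hc0]
      simpa using hasFDerivAt_ringInverse (𝕜 := ℝ) (1 : (MatR n)ˣ)
    have h2 := h1.comp_hasDerivAt 0 hcd
    exact h2.congr_deriv (by simp)
  have hprod : HasDerivAt (fun t => c t * V * Ring.inverse (c t)) (W * V - V * W) 0 := by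
    have h3 := (hcd.mul_const V).mul hinv
    rw [hc0, Ring.inverse_one] at h3
    exact h3.congr_deriv (by simp [sub_eq_add_neg])
  have hcomp : HasDerivAt (fun t => F (c t * V * Ring.inverse (c t)))
      (fderiv ℝ F V (W * V - V * W)) 0 := by
    have hpt : c 0 * V * Ring.inverse (c 0) = V := by rw [hc0, Ring.inverse_one]; simp
    have h4 := (hFd (c 0 * V * Ring.inverse (c 0))).hasFDerivAt.comp_hasDerivAt 0 hprod
    rw [hpt] at h4
    exact h4
  have hconst : HasDerivAt (fun t => F (c t * V * Ring.inverse (c t))) 0 0 := by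
    apply (hasDerivAt_const (0:ℝ) (F V)).congr_of_eventuallyEq
    filter_upwards [hunit] with t ht
    obtain ⟨u, hu⟩ := ht
    rw [← hu, Ring.inverse_unit]
    exact congrArg (fun q => Polynomial.coeff q k) (charpoly_units_conj u V)
  exact hcomp.unique hconst

end Aux3

section Aux4

attribute [local instance] Matrix.linftyOpNormedAddCommGroup Matrix.linftyOpNormedSpace
  Matrix.linftyOpNormedRing Matrix.linftyOpNormedAlgebra Matrix.linftyOpIsBoundedSMul

variable {n : ℕ}

lemma fderiv_eval_comm (k : ℕ) (V W : MatR n) :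
    fderiv ℝ (fun v : (Fin n × Fin n) → ℝ => eval v ((Matrix.charpoly.univ ℝ (Fin n)).coeff k))
      (entCLM n V) (entCLM n (W * V - V * W)) = 0 := by
  have hcomp : fderiv ℝ ((fun v : (Fin n × Fin n) → ℝ =>
        eval v ((Matrix.charpoly.univ ℝ (Fin n)).coeff k)) ∘ (entCLM n)) V
      = (fderiv ℝ (fun v : (Fin n × Fin n) → ℝ =>
          eval v ((Matrix.charpoly.univ ℝ (Fin n)).coeff k)) (entCLM n V)).comp
        (entCLM n) := by
    exact (fderiv_comp V ((diff_evalP _) (entCLM n V)) (entCLM n).differentiableAt).trans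
      (congrArg (fun L => (fderiv ℝ (fun v : (Fin n × Fin n) → ℝ =>
        eval v ((Matrix.charpoly.univ ℝ (Fin n)).coeff k)) (entCLM n V)).comp L) (entCLM n).fderiv)
  have h0 := fderiv_charcoeff_comm k V W
  rw [charcoeff_eq_comp k, hcomp] at h0
  simpa using h0

end Aux4

section Aux5

lemma clm_zero_of_single {n : ℕ} {φ : (Fin n → ℝ) →L[ℝ] ℝ}
    (h : ∀ l, φ (Pi.single l 1) = 0) : φ = 0 := by
  apply ContinuousLinearMap.ext
  intro v
  have hv : v = ∑ l, v l • (Pi.single l 1 : Fin n → ℝ) := by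
    funext j
    rw [Finset.sum_apply]
    simp [Pi.single_apply]
  rw [hv, map_sum]
  simp [h]

lemma const_of_fderiv_zero_on {n : ℕ} {f : (Fin n → ℝ) → ℝ} {U : Set (Fin n → ℝ)}
    (hU : IsOpen U) (hconn : IsPreconnected U)
    (hdiff : ∀ x ∈ U, DifferentiableAt ℝ f x)
    (hzero : ∀ x ∈ U, fderiv ℝ f x = 0) :
    ∀ x ∈ U, ∀ y ∈ U, f x = f y := by
  have hloc : ∀ z ∈ U, ∃ t, IsOpen t ∧ z ∈ t ∧ t ⊆ U ∧ ∀ w ∈ t, f w = f z := by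
    intro z hz
    obtain ⟨ε, hε, hball⟩ := Metric.isOpen_iff.1 hU z hz
    refine ⟨Metric.ball z ε, Metric.isOpen_ball, Metric.mem_ball_self hε, hball, ?_⟩
    intro w hw
    refine (convex_ball z ε).is_const_of_fderivWithin_eq_zero (𝕜 := ℝ) ?_ ?_ hw
      (Metric.mem_ball_self hε)
    · intro w' hw'
      exact (hdiff w' (hball hw')).differentiableWithinAt
    · intro w' hw'
      rw [fderivWithin_of_isOpen Metric.isOpen_ball hw']
      exact hzero w' (hball hw')
  intro x hx y hy
  by_contra hne
  set u : Set (Fin n → ℝ) := {z ∈ U | f z = f x} with hu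
  set v : Set (Fin n → ℝ) := {z ∈ U | f z ≠ f x} with hv
  have hu_open : IsOpen u := by
    rw [isOpen_iff_mem_nhds]
    rintro z ⟨hzU, hzf⟩
    obtain ⟨t, ht_open, hzt, htU, htf⟩ := hloc z hzU
    refine Filter.mem_of_superset (ht_open.mem_nhds hzt) ?_
    intro w hw
    exact ⟨htU hw, (htf w hw).trans hzf⟩
  have hv_open : IsOpen v := by
    rw [isOpen_iff_mem_nhds]
    rintro z ⟨hzU, hzf⟩
    obtain ⟨t, ht_open, hzt, htU, htf⟩ := hloc z hzU
    refine Filter.mem_of_superset (ht_open.mem_nhds hzt) ?_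
    intro w hw
    exact ⟨htU hw, by rw [htf w hw]; exact hzf⟩
  obtain ⟨w, hwU, hwu, hwv⟩ := hconn u v hu_open hv_open
    (fun z hz => by by_cases h : f z = f x
                    · exact Or.inl ⟨hz, h⟩
                    · exact Or.inr ⟨hz, h⟩)
    ⟨x, hx, hx, rfl⟩ ⟨y, hy, hy, fun h => hne h.symm⟩
  exact hwv.2 hwu.2

end Aux5

lemma Bcore {n : ℕ} (d : Fin n → ℝ) (d1 : ℝ) (b : Fin n → Fin n → ℝ)
    (a : Fin n → Fin n → Fin n → ℝ) (u : Fin n → ℝ)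
    (hbdiag : ∀ i, b i i = 0)
    (h1 : ∀ i j k, i ≠ j → j ≠ k → i ≠ k → a k i j = b i k * b k j)
    (h2 : ∀ i j, i ≠ j → ∑ l, a l i j = 0)
    (h3 : ∀ i j, i ≠ j → ∑ l, u l * a l i j = (d i - d j - 1) * b i j)
    (l i j : Fin n) :
    (if i = j then 0 else
      ((if j = l then (1:ℝ) else 0) - (if i = l then 1 else 0)) * b i j
        + (u j - u i) * a l i j)
    = ∑ m, (((if m = l then b i l else 0) - (if i = l then b l m else 0))
          * ((u j - u m) * b m j - (d j - d1) * (if m = j then 1 else 0))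
        - ((u m - u i) * b i m - (d m - d1) * (if i = m then 1 else 0))
          * ((if j = l then b m l else 0) - (if m = l then b l j else 0))) := by
  classical
  by_cases hij : i = j
  · subst hij
    rw [if_pos rfl]
    symm
    apply Finset.sum_eq_zero
    intro m _
    by_cases hil : i = l
    · subst hil
      by_cases hmi : m = i
      · subst hmi; simp [hbdiag]
      · have him : ¬ i = m := fun h => hmi h.symm
        simp only [if_pos rfl, if_neg hmi, if_neg him, hbdiag, if_true]
        ring
    · by_cases hml : m = l
      · subst hml
        have hli : ¬ m = i := fun h => hil h.symm
        by_cases hmi : m = i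
        · exact absurd hmi hli
        · have him : ¬ i = m := fun h => hmi h.symm
          simp only [if_pos rfl, if_neg hil, if_neg hmi, if_neg him, if_true]
          ring
      · simp [hil, hml]
  · rw [if_neg hij]
    have hijne : i ≠ j := hij
    have hji : ¬ j = i := fun h => hij h.symm
    set s : Finset (Fin n) := Finset.univ \ {i, j} with hs
    have hins : (Finset.univ : Finset (Fin n)) = insert i (insert j s) := by
      ext m; simp [hs]; tauto
    have hi_not : i ∉ insert j s := by simp [hs, hijne]
    have hj_not : j ∉ s := by simp [hs]
    have hmem : ∀ m ∈ s, m ≠ i ∧ m ≠ j := by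
      intro m hm
      rw [hs] at hm
      simp only [Finset.mem_sdiff, Finset.mem_univ, true_and, Finset.mem_insert,
        Finset.mem_singleton] at hm
      exact ⟨fun h => hm (Or.inl h), fun h => hm (Or.inr h)⟩
    have h2' := h2 i j hijne
    have h3' := h3 i j hijne
    rw [hins, Finset.sum_insert hi_not, Finset.sum_insert hj_not] at h2' h3'
    rw [hins, Finset.sum_insert hi_not, Finset.sum_insert hj_not]
    by_cases hil : i = l
    · subst hil
      have hsum : ∑ m ∈ s, (((if m = i then b i i else 0) - (if i = i then b i m else 0))
            * ((u j - u m) * b m j - (d j - d1) * (if m = j then 1 else 0))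
          - ((u m - u i) * b i m - (d m - d1) * (if i = m then 1 else 0))
            * ((if j = i then b m i else 0) - (if m = i then b i j else 0)))
          = ∑ m ∈ s, (u m * a m i j - u j * a m i j) := by
        apply Finset.sum_congr rfl
        intro m hm
        obtain ⟨hmi, hmj⟩ := hmem m hm
        rw [h1 i j m hijne (Ne.symm hmj) (Ne.symm hmi)]
        simp only [if_pos rfl, if_neg hmi, if_neg hmj, if_neg (Ne.symm hmi), if_neg hji, if_true]
        ring
      rw [hsum, Finset.sum_sub_distrib, ← Finset.mul_sum]
      simp only [if_pos rfl, if_neg hijne, if_neg hji, hbdiag, if_true]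
      linear_combination u j * h2' - h3'
    · by_cases hjl : j = l
      · subst hjl
        have hsum : ∑ m ∈ s, (((if m = j then b i j else 0) - (if i = j then b j m else 0))
              * ((u j - u m) * b m j - (d j - d1) * (if m = j then 1 else 0))
            - ((u m - u i) * b i m - (d m - d1) * (if i = m then 1 else 0))
              * ((if j = j then b m j else 0) - (if m = j then b j j else 0)))
            = ∑ m ∈ s, (u i * a m i j - u m * a m i j) := by
          apply Finset.sum_congr rfl
          intro m hm
          obtain ⟨hmi, hmj⟩ := hmem m hm
          rw [h1 i j m hijne (Ne.symm hmj) (Ne.symm hmi)]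
          simp only [if_pos rfl, if_neg hmi, if_neg hmj, if_neg (Ne.symm hmi), if_neg hijne,
            if_true]
          ring
        rw [hsum, Finset.sum_sub_distrib, ← Finset.mul_sum]
        simp only [if_pos rfl, if_neg hijne, if_neg hji, hbdiag, if_true]
        linear_combination h3' - u i * h2'
      · have hli : ¬ l = i := fun h => hil h.symm
        have hlj : ¬ l = j := fun h => hjl h.symm
        have hsum : ∑ m ∈ s, (((if m = l then b i l else 0) - (if i = l then b l m else 0))
              * ((u j - u m) * b m j - (d j - d1) * (if m = j then 1 else 0))
            - ((u m - u i) * b i m - (d m - d1) * (if i = m then 1 else 0))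
              * ((if j = l then b m l else 0) - (if m = l then b l j else 0)))
            = ∑ m ∈ s, (if m = l then
                (b i l * ((u j - u l) * b l j) + ((u l - u i) * b i l) * b l j) else 0) := by
          apply Finset.sum_congr rfl
          intro m hm
          obtain ⟨hmi, hmj⟩ := hmem m hm
          by_cases hml : m = l
          · subst hml
            simp only [if_pos rfl, if_neg hil, if_neg hjl, if_neg hmi, if_neg hmj,
              if_neg (Ne.symm hmi), if_true]
            ring
          · simp [hml, hil, hjl, if_neg (Ne.symm hmi), hmi, hmj]
        rw [hsum, Finset.sum_ite_eq' s l]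
        have hls : l ∈ s := by
          rw [hs]
          simp only [Finset.mem_sdiff, Finset.mem_univ, true_and, Finset.mem_insert,
            Finset.mem_singleton]
          push_neg
          exact ⟨hli, hlj⟩
        rw [if_pos hls]
        rw [h1 i j l hijne hjl hil]
        simp only [if_neg hil, if_neg hjl, if_neg hijne, if_neg hji, if_neg hli, if_neg hlj,
          hbdiag, if_true]
        ring
section Main

attribute [local instance] Matrix.linftyOpNormedAddCommGroup Matrix.linftyOpNormedSpace
  Matrix.linftyOpNormedRing Matrix.linftyOpNormedAlgebra Matrix.linftyOpIsBoundedSMul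

theorem lax_matrix_isospectral {n : ℕ} (hn : 2 ≤ n) (d : Fin n → ℝ)
    (U : Set (Fin n → ℝ)) (hU : IsOpen U) (hconn : IsConnected U)
    (hdist : ∀ x ∈ U, ∀ i j : Fin n, i ≠ j → x i ≠ x j)
    (β : Fin n → Fin n → (Fin n → ℝ) → ℝ)
    (hβ : ∀ i j : Fin n, i ≠ j → ContDiffOn ℝ (⊤ : ℕ∞) (β i j) U)
    (hβdiag : ∀ i : Fin n, ∀ x ∈ U, β i i x = 0)
    (hED1 : ∀ i j k : Fin n, i ≠ j → j ≠ k → i ≠ k →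
      ∀ x ∈ U, pd k (β i j) x = β i k x * β k j x)
    (hED2 : ∀ i j : Fin n, i ≠ j → ∀ x ∈ U, ∑ l, pd l (β i j) x = 0)
    (hED3 : ∀ i j : Fin n, i ≠ j → ∀ x ∈ U,
      ∑ l, x l * pd l (β i j) x = (d i - d j - 1) * β i j x) :
    ∀ x ∈ U, ∀ y ∈ U,
      (Vmat d (d ⟨0, by omega⟩) β x).charpoly
        = (Vmat d (d ⟨0, by omega⟩) β y).charpoly := by
  intro x hx y hy
  apply Polynomial.ext
  intro k
  set d1 : ℝ := d ⟨0, by omega⟩ with hd1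
  let P : MvPolynomial (Fin n × Fin n) ℝ := (Matrix.charpoly.univ ℝ (Fin n)).coeff k
  let ent : (Fin n → ℝ) → (Fin n × Fin n) → ℝ := fun z p =>
    (z p.2 - z p.1) * β p.1 p.2 z - (d p.2 - d1) * (if p.1 = p.2 then 1 else 0)
  let g : (Fin n → ℝ) → ℝ := fun z => ((Vmat d d1 β z).charpoly).coeff k
  have hgrepr : g = fun z => eval (ent z) P := by
    funext z
    exact charcoeff_eq_eval k (Vmat d d1 β z)
  suffices h : ∀ z ∈ U, DifferentiableAt ℝ g z ∧ fderiv ℝ g z = 0 by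
    exact const_of_fderiv_zero_on hU hconn.isPreconnected
      (fun z hz => (h z hz).1) (fun z hz => (h z hz).2) x hx y hy
  intro z hz
  have hbd : ∀ i j : Fin n, i ≠ j → DifferentiableAt ℝ (β i j) z := fun i j hij =>
    ((hβ i j hij).differentiableOn (by simp)).differentiableAt (hU.mem_nhds hz)
  let D : (Fin n × Fin n) → ((Fin n → ℝ) →L[ℝ] ℝ) := fun p =>
    if p.1 = p.2 then 0 else
      (z p.2 - z p.1) • fderiv ℝ (β p.1 p.2) z
        + β p.1 p.2 z • ((ContinuousLinearMap.proj p.2 : (Fin n → ℝ) →L[ℝ] ℝ)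
            - ContinuousLinearMap.proj p.1)
  have hD : ∀ p, HasFDerivAt (fun w => ent w p) (D p) z := by
    rintro ⟨i, j⟩
    by_cases hij : i = j
    · have hfun : (fun w => ent w (i, j)) = fun _ => -((d j - d1) * (if i = j then 1 else 0)) := by
        funext w
        simp only [ent]
        rw [hij]
        simp
      have hDz : D (i, j) = 0 := if_pos hij
      rw [hfun, hDz]
      exact hasFDerivAt_const _ _
    · have hb := (hbd i j hij).hasFDerivAt
      have hpj : HasFDerivAt (fun w : Fin n → ℝ => w j)
          (ContinuousLinearMap.proj j : (Fin n → ℝ) →L[ℝ] ℝ) z :=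
        (ContinuousLinearMap.proj j : (Fin n → ℝ) →L[ℝ] ℝ).hasFDerivAt
      have hpi : HasFDerivAt (fun w : Fin n → ℝ => w i)
          (ContinuousLinearMap.proj i : (Fin n → ℝ) →L[ℝ] ℝ) z :=
        (ContinuousLinearMap.proj i : (Fin n → ℝ) →L[ℝ] ℝ).hasFDerivAt
      have hsub : HasFDerivAt (fun w : Fin n → ℝ => w j - w i)
          ((ContinuousLinearMap.proj j : (Fin n → ℝ) →L[ℝ] ℝ) - ContinuousLinearMap.proj i) z :=
        hpj.sub hpi
      have hmul := hsub.mul hb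
      have hfin := hmul.sub_const ((d j - d1) * (if i = j then 1 else 0))
      have hDz : D (i, j) = (z j - z i) • fderiv ℝ (β i j) z
          + β i j z • ((ContinuousLinearMap.proj j : (Fin n → ℝ) →L[ℝ] ℝ)
              - ContinuousLinearMap.proj i) := if_neg hij
      rw [hDz]
      exact hfin
  have hdiffent : DifferentiableAt ℝ ent z := differentiableAt_pi.2 fun p => (hD p).differentiableAt
  have hfent : fderiv ℝ ent z = ContinuousLinearMap.pi (fun p => fderiv ℝ (fun w => ent w p) z) :=
    fderiv_pi (fun p => (hD p).differentiableAt)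
  let V : MatR n := Vmat d d1 β z
  let Wm : Fin n → MatR n := fun l =>
    Matrix.of fun i j => (if j = l then β i l z else 0) - (if i = l then β l j z else 0)
  have hcommut : ∀ l, fderiv ℝ ent z (Pi.single l 1) = entCLM n (Wm l * V - V * Wm l) := by
    intro l
    funext p
    obtain ⟨i, j⟩ := p
    rw [hfent, ContinuousLinearMap.pi_apply, (hD (i, j)).fderiv, entCLM_apply]
    have hB := Bcore d d1 (fun i j => β i j z) (fun l i j => pd l (β i j) z) z
      (fun i => hβdiag i z hz)
      (fun i j m hij hjm him => hED1 i j m hij hjm him z hz)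
      (fun i j hij => hED2 i j hij z hz)
      (fun i j hij => hED3 i j hij z hz) l i j
    simp only [pd] at hB
    have hRB : (Wm l * V - V * Wm l) i j
        = ∑ m, (((if m = l then β i l z else 0) - (if i = l then β l m z else 0))
              * ((z j - z m) * β m j z - (d j - d1) * (if m = j then 1 else 0))
            - ((z m - z i) * β i m z - (d m - d1) * (if i = m then 1 else 0))
              * ((if j = l then β m l z else 0) - (if m = l then β l j z else 0))) := by
      simp only [Matrix.sub_apply, Matrix.mul_apply, ← Finset.sum_sub_distrib, V, Wm,
        Matrix.of_apply, Vmat]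
    rw [hRB, ← hB]
    by_cases hij : i = j
    · have hDz : D (i, j) = 0 := if_pos hij
      rw [hDz, if_pos hij]
      rfl
    · have hDz : D (i, j) = (z j - z i) • fderiv ℝ (β i j) z
          + β i j z • ((ContinuousLinearMap.proj j : (Fin n → ℝ) →L[ℝ] ℝ)
              - ContinuousLinearMap.proj i) := if_neg hij
      rw [hDz, if_neg hij]
      simp only [ContinuousLinearMap.add_apply, ContinuousLinearMap.smul_apply,
        ContinuousLinearMap.sub_apply, ContinuousLinearMap.proj_apply, Pi.single_apply,
        smul_eq_mul]
      ring
  constructor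
  · rw [hgrepr]
    exact ((diff_evalP P) (ent z)).comp z hdiffent
  · apply clm_zero_of_single
    intro l
    rw [hgrepr]
    have hcomp : fderiv ℝ (fun w => eval (ent w) P) z
        = (fderiv ℝ (fun v : (Fin n × Fin n) → ℝ => eval v P) (ent z)).comp (fderiv ℝ ent z) :=
      fderiv_comp z ((diff_evalP P) (ent z)) hdiffent
    rw [hcomp, ContinuousLinearMap.comp_apply, hcommut l]
    exact fderiv_eval_comm k V (Wm l)

end Main
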